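/- Let V be an N×N complex unitary matrix and let g : ℂ^N → ℂ be permutation invariant, with g(v_i) ≠ 0 and g(v_{f,i}) ≠ 0 for every i = 1,…,N. Then the function h(λ, V) = D_f^{-1} V D λ simultaneously satisfies, for every λ ∈ ℂ^N and every N×N permutation matrix P: (i) h(h(λ, V), V^H) = λ; (ii) h(λ, PV) = P h(λ, V); and (iii) h(P^T λ, V P) = h(λ, V). -/

import Mathlib

open Matrix

/-- `g : ℂ^N → ℂ` is permutation invariant if `g (P x) = g x` for every
permutation matrix `P` and every `x`. -/
def PermInvariant (N : ℕ) (g : (Fin N → ℂ) → ℂ) : Prop :=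
  ∀ (σ : Equiv.Perm (Fin N)) (x : Fin N → ℂ), g ((σ.permMatrix ℂ).mulVec x) = g x

/-- `colDiag g V = diag (g v_1, …, g v_N)` where `v_i` are the columns of `V`. -/
def colDiag (N : ℕ) (g : (Fin N → ℂ) → ℂ) (V : Matrix (Fin N) (Fin N) ℂ) :
    Matrix (Fin N) (Fin N) ℂ :=
  Matrix.diagonal fun i => g fun j => V j i

/-- The eigenvalue map `h(λ, V) = D_f⁻¹ V D λ`, where `D = diag(g(v_i))` with `v_i`
the columns of `V`, and `D_f = diag(g(v_{f,i}))` with `v_{f,i}` the columns of `Vᴴ`. -/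
noncomputable def hMap (N : ℕ) (g : (Fin N → ℂ) → ℂ) (V : Matrix (Fin N) (Fin N) ℂ)
    (lam : Fin N → ℂ) : Fin N → ℂ :=
  ((colDiag N g Vᴴ)⁻¹ * V * colDiag N g V).mulVec lam

/-!
With `H(V) = D_f⁻¹ V D`, so that `h(λ, V) = H(V) λ`, the three axioms are matrix identities.
Replacing `V` by `PV` permutes the entries of each column of `V`, so `D` is unchanged by
permutation invariance of `g`, and permutes the columns of `Vᴴ`, which conjugates `D_f` by `P`;
hence `H(PV) = P H(V)`, and dually `H(VP) = H(V) P`. Duality is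
`H(Vᴴ) H(V) = D⁻¹ Vᴴ D_f D_f⁻¹ V D = D⁻¹ Vᴴ V D = 1`.
-/

section PermMatrix

variable {n R : Type*} [DecidableEq n] [Fintype n]

lemma permMatrix_mul_permMatrix_inv [NonAssocSemiring R] (σ : Equiv.Perm n) :
    σ.permMatrix R * σ⁻¹.permMatrix R = 1 := by
  rw [← permMatrix_mul, inv_mul_cancel, permMatrix_one]

lemma permMatrix_inv_mul_permMatrix [NonAssocSemiring R] (σ : Equiv.Perm n) :
    σ⁻¹.permMatrix R * σ.permMatrix R = 1 := by
  rw [← permMatrix_mul, mul_inv_cancel, permMatrix_one]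

lemma permMatrix_mul_permMatrix_inv_assoc [Semiring R] (σ : Equiv.Perm n)
    (M : Matrix n n R) : σ.permMatrix R * (σ⁻¹.permMatrix R * M) = M := by
  rw [← Matrix.mul_assoc, permMatrix_mul_permMatrix_inv, Matrix.one_mul]

lemma permMatrix_inv_mul_permMatrix_assoc [Semiring R] (σ : Equiv.Perm n)
    (M : Matrix n n R) : σ⁻¹.permMatrix R * (σ.permMatrix R * M) = M := by
  rw [← Matrix.mul_assoc, permMatrix_inv_mul_permMatrix, Matrix.one_mul]

lemma inv_permMatrix [CommRing R] (σ : Equiv.Perm n) :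
    (σ.permMatrix R)⁻¹ = σ⁻¹.permMatrix R :=
  inv_eq_right_inv (permMatrix_mul_permMatrix_inv σ)

lemma permMatrix_inv_mul_diagonal_mul_permMatrix [NonAssocSemiring R] (σ : Equiv.Perm n)
    (d : n → R) :
    σ⁻¹.permMatrix R * diagonal d * σ.permMatrix R = diagonal (d ∘ σ.symm) := by
  rw [PEquiv.toMatrix_toPEquiv_mul, PEquiv.mul_toMatrix_toPEquiv, submatrix_submatrix]
  exact submatrix_diagonal_equiv d σ.symm

end PermMatrix

section ColDiag

variable {N : ℕ} {g : (Fin N → ℂ) → ℂ}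

lemma colDiag_permMatrix_mul (hg : PermInvariant N g) (σ : Equiv.Perm (Fin N))
    (V : Matrix (Fin N) (Fin N) ℂ) :
    colDiag N g (σ.permMatrix ℂ * V) = colDiag N g V := by
  simp only [colDiag, ← hg σ (fun j => V j _), permMatrix_mulVec,
    PEquiv.toMatrix_toPEquiv_mul]
  rfl

lemma colDiag_mul_permMatrix (σ : Equiv.Perm (Fin N)) (V : Matrix (Fin N) (Fin N) ℂ) :
    colDiag N g (V * σ.permMatrix ℂ) = σ⁻¹.permMatrix ℂ * colDiag N g V * σ.permMatrix ℂ := by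
  rw [colDiag, colDiag, permMatrix_inv_mul_diagonal_mul_permMatrix,
    PEquiv.mul_toMatrix_toPEquiv]
  rfl

lemma isUnit_det_colDiag {V : Matrix (Fin N) (Fin N) ℂ} (hV : ∀ i, g (fun j => V j i) ≠ 0) :
    IsUnit (colDiag N g V).det := by
  rw [colDiag, det_diagonal]
  exact isUnit_iff_ne_zero.mpr (Finset.prod_ne_zero_iff.mpr fun i _ => hV i)

end ColDiag

noncomputable def hMatrix (N : ℕ) (g : (Fin N → ℂ) → ℂ) (V : Matrix (Fin N) (Fin N) ℂ) :
    Matrix (Fin N) (Fin N) ℂ :=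
  (colDiag N g Vᴴ)⁻¹ * V * colDiag N g V

section HMatrix

variable {N : ℕ} {g : (Fin N → ℂ) → ℂ}

lemma hMap_eq_hMatrix_mulVec (V : Matrix (Fin N) (Fin N) ℂ) (lam : Fin N → ℂ) :
    hMap N g V lam = hMatrix N g V *ᵥ lam :=
  rfl

lemma hMatrix_conjTranspose_mul_hMatrix {V : Matrix (Fin N) (Fin N) ℂ} (hV : Vᴴ * V = 1)
    (hD : ∀ i, g (fun j => V j i) ≠ 0) (hDf : ∀ i, g (fun j => Vᴴ j i) ≠ 0) :
    hMatrix N g Vᴴ * hMatrix N g V = 1 := by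
  rw [hMatrix, hMatrix, conjTranspose_conjTranspose]
  calc (colDiag N g V)⁻¹ * Vᴴ * colDiag N g Vᴴ * ((colDiag N g Vᴴ)⁻¹ * V * colDiag N g V)
      = (colDiag N g V)⁻¹ * Vᴴ * (colDiag N g Vᴴ * (colDiag N g Vᴴ)⁻¹) * V * colDiag N g V := by
        simp only [Matrix.mul_assoc]
    _ = (colDiag N g V)⁻¹ * (Vᴴ * V) * colDiag N g V := by
        rw [mul_nonsing_inv _ (isUnit_det_colDiag hDf), Matrix.mul_one, Matrix.mul_assoc _ Vᴴ]
    _ = 1 := by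
        rw [hV, Matrix.mul_one, nonsing_inv_mul _ (isUnit_det_colDiag hD)]

lemma hMatrix_permMatrix_mul (hg : PermInvariant N g) (σ : Equiv.Perm (Fin N))
    (V : Matrix (Fin N) (Fin N) ℂ) :
    hMatrix N g (σ.permMatrix ℂ * V) = σ.permMatrix ℂ * hMatrix N g V := by
  have hDf : colDiag N g (σ.permMatrix ℂ * V)ᴴ
      = σ.permMatrix ℂ * colDiag N g Vᴴ * σ⁻¹.permMatrix ℂ := by
    rw [conjTranspose_mul, conjTranspose_permMatrix, colDiag_mul_permMatrix, inv_inv]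
  rw [hMatrix, hMatrix, hDf, colDiag_permMatrix_mul hg, Matrix.mul_inv_rev, Matrix.mul_inv_rev,
    inv_permMatrix, inv_permMatrix, inv_inv]
  simp only [Matrix.mul_assoc, permMatrix_inv_mul_permMatrix_assoc]

lemma hMatrix_mul_permMatrix (hg : PermInvariant N g) (σ : Equiv.Perm (Fin N))
    (V : Matrix (Fin N) (Fin N) ℂ) :
    hMatrix N g (V * σ.permMatrix ℂ) = hMatrix N g V * σ.permMatrix ℂ := by
  have hDf : colDiag N g (V * σ.permMatrix ℂ)ᴴ = colDiag N g Vᴴ := by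
    rw [conjTranspose_mul, conjTranspose_permMatrix, colDiag_permMatrix_mul hg]
  rw [hMatrix, hMatrix, hDf, colDiag_mul_permMatrix]
  simp only [Matrix.mul_assoc, permMatrix_mul_permMatrix_inv_assoc]

end HMatrix

theorem dual_eigenvalue_map_satisfies_axioms_general (N : ℕ)
    (V : Matrix (Fin N) (Fin N) ℂ) (hV : Vᴴ * V = 1)
    (g : (Fin N → ℂ) → ℂ) (hg : PermInvariant N g)
    (hD : ∀ i, g (fun j => V j i) ≠ 0) (hDf : ∀ i, g (fun j => Vᴴ j i) ≠ 0) :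
    ∀ (lam : Fin N → ℂ) (σ : Equiv.Perm (Fin N)),
      hMap N g Vᴴ (hMap N g V lam) = lam ∧
      hMap N g (σ.permMatrix ℂ * V) lam = (σ.permMatrix ℂ).mulVec (hMap N g V lam) ∧
      hMap N g (V * σ.permMatrix ℂ) ((σ.permMatrix ℂ)ᵀ.mulVec lam) = hMap N g V lam := by
  intro lam σ
  simp only [hMap_eq_hMatrix_mulVec]
  refine ⟨?duality, ?reordering, ?permutation⟩
  case duality =>
    rw [mulVec_mulVec, hMatrix_conjTranspose_mul_hMatrix hV hD hDf, one_mulVec]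
  case reordering =>
    rw [hMatrix_permMatrix_mul hg, mulVec_mulVec]
  case permutation =>
    rw [hMatrix_mul_permMatrix hg, transpose_permMatrix, mulVec_mulVec, Matrix.mul_assoc,
      permMatrix_mul_permMatrix_inv, Matrix.mul_one]

/-- Theorem 1: the map `h(λ, V) = D_f⁻¹ V D λ` simultaneously satisfies the
duality (A1), reordering (A2) and permutation (A3) axioms. -/
theorem dual_eigenvalue_map_satisfies_axioms (N : ℕ) (hN : 1 ≤ N)
    (V : Matrix (Fin N) (Fin N) ℂ) (hV : Vᴴ * V = 1)
    (g : (Fin N → ℂ) → ℂ) (hg : PermInvariant N g)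
    (hD : ∀ i, g (fun j => V j i) ≠ 0) (hDf : ∀ i, g (fun j => Vᴴ j i) ≠ 0) :
    ∀ (lam : Fin N → ℂ) (σ : Equiv.Perm (Fin N)),
      hMap N g Vᴴ (hMap N g V lam) = lam ∧
      hMap N g (σ.permMatrix ℂ * V) lam = (σ.permMatrix ℂ).mulVec (hMap N g V lam) ∧
      hMap N g (V * σ.permMatrix ℂ) ((σ.permMatrix ℂ)ᵀ.mulVec lam) = hMap N g V lam :=
  dual_eigenvalue_map_satisfies_axioms_general N V hV g hg hD hDf
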